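/- In an idempotent residuated chain, if elements x and y do not commute (x·y ≠ y·x), then x and y lie in the same layer of the monoidal preorder: for every z, (z·x = x·z = z ≠ x) if and only if (z·y = y·z = z ≠ y), and (x·z = z·x = x ≠ z) if and only if (y·z = z·y = y ≠ z). -/

import Mathlib

/-!
Residuation makes multiplication monotone, and a monotone idempotent monoid on a chain is
conservative: `a * b` is `min a b` or `max a b` according as `a * b ≤ 1` or `1 ≤ a * b`.
Two non-commuting elements of a conservative band therefore satisfy `x * y = x, y * x = y`
or its mirror image, and then `x` and `y` absorb, and are absorbed by, exactly the same
elements. The mirror case is the first one in the opposite monoid.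
-/

open MulOpposite

lemma mulLeftMono_of_residuated {A : Type*} [Mul A] [Preorder A] (ld : A → A → A)
    (resl : ∀ x y z : A, x * y ≤ z ↔ y ≤ ld x z) : MulLeftMono A :=
  ⟨fun a _ c hbc => (resl a _ (a * c)).2 (hbc.trans ((resl a c _).1 le_rfl))⟩

lemma mulRightMono_of_residuated {A : Type*} [Mul A] [Preorder A] (rd : A → A → A)
    (resr : ∀ x y z : A, x * y ≤ z ↔ x ≤ rd z y) : MulRightMono A :=
  ⟨fun c _ b hab => (resr _ c (b * c)).2 (hab.trans ((resr b c _).1 le_rfl))⟩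

section Conservative

variable {A : Type*} [Monoid A] [LinearOrder A] [MulLeftMono A] [MulRightMono A]

lemma mul_eq_min_or_eq_max_of_idempotent (idem : ∀ x : A, x * x = x) (a b : A) :
    a * b = min a b ∨ a * b = max a b := by
  have min_le_mul : min a b ≤ a * b :=
    (idem _).ge.trans (mul_le_mul' (min_le_left a b) (min_le_right a b))
  have mul_le_max : a * b ≤ max a b :=
    (mul_le_mul' (le_max_left a b) (le_max_right a b)).trans (idem _).le
  have left_absorb : a * (a * b) = a * b := by rw [← mul_assoc, idem]
  have right_absorb : a * b * b = a * b := by rw [mul_assoc, idem]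
  rcases le_total (a * b) 1 with h | h
  · refine .inl (le_antisymm (le_min ?_ ?_) min_le_mul)
    · calc a * b = a * (a * b) := left_absorb.symm
        _ ≤ a * 1 := mul_le_mul_right h a
        _ = a := mul_one a
    · calc a * b = a * b * b := right_absorb.symm
        _ ≤ 1 * b := mul_le_mul_left h b
        _ = b := one_mul b
  · refine .inr (le_antisymm mul_le_max (max_le ?_ ?_))
    · calc a = a * 1 := (mul_one a).symm
        _ ≤ a * (a * b) := mul_le_mul_right h a
        _ = a * b := left_absorb
    · calc b = 1 * b := (one_mul b).symm
        _ ≤ a * b * b := mul_le_mul_left h b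
        _ = a * b := right_absorb

lemma mul_eq_left_or_eq_right_of_idempotent (idem : ∀ x : A, x * x = x) (a b : A) :
    a * b = a ∨ a * b = b := by
  rcases mul_eq_min_or_eq_max_of_idempotent idem a b with h | h
  · exact (min_choice a b).imp h.trans h.trans
  · exact (max_choice a b).imp h.trans h.trans

end Conservative

section Band

variable {S : Type*} [Semigroup S]

lemma mul_comm_cases_of_conservative (cons : ∀ a b : S, a * b = a ∨ a * b = b) {x y : S}
    (hxy : x * y ≠ y * x) : (x * y = x ∧ y * x = y) ∨ (x * y = y ∧ y * x = x) := by
  rcases cons x y with h₁ | h₁ <;> rcases cons y x with h₂ | h₂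
  · exact .inl ⟨h₁, h₂⟩
  · exact absurd (h₁.trans h₂.symm) hxy
  · exact absurd (h₁.trans h₂.symm) hxy
  · exact .inr ⟨h₁, h₂⟩

lemma absorbed_of_absorbed_of_left_zero_pair (cons : ∀ a b : S, a * b = a ∨ a * b = b)
    {x y z : S} (hxy : x * y = x) (hne : x ≠ y) (hzx : z * x = z) (hxz : x * z = z)
    (hz : z ≠ x) : z * y = z ∧ y * z = z ∧ z ≠ y := by
  refine ⟨by rw [← hzx, mul_assoc, hxy], ?_, ?_⟩
  · refine (cons y z).resolve_left fun hyz => hz ?_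
    rw [← hxz, ← hxy, mul_assoc, hyz, hxy]
  · rintro rfl
    exact hne (hxy.symm.trans hxz)

lemma absorbs_of_absorbs_of_left_zero_pair (cons : ∀ a b : S, a * b = a ∨ a * b = b)
    {x y z : S} (hyx : y * x = y) (hne : x ≠ y) (hxz : x * z = x) (hzx : z * x = x)
    (hz : x ≠ z) : y * z = y ∧ z * y = y ∧ y ≠ z := by
  have hzy : z * y = y := (cons z y).resolve_left fun h => hz <| by
    rw [← hzx, ← h, mul_assoc, hyx, h]
  refine ⟨(cons y z).resolve_right fun h => hne ?_, hzy, ?_⟩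
  · rw [← hzx, ← h, mul_assoc, hzx, hyx]
  · rintro rfl
    exact hne (hzx.symm.trans hyx)

lemma same_layer_of_left_zero_pair (cons : ∀ a b : S, a * b = a ∨ a * b = b) {x y : S}
    (hxy : x * y = x) (hyx : y * x = y) (hne : x ≠ y) (z : S) :
    ((z * x = z ∧ x * z = z ∧ z ≠ x) ↔ (z * y = z ∧ y * z = z ∧ z ≠ y)) ∧
      ((x * z = x ∧ z * x = x ∧ x ≠ z) ↔ (y * z = y ∧ z * y = y ∧ y ≠ z)) :=
  ⟨⟨fun ⟨h₁, h₂, h₃⟩ => absorbed_of_absorbed_of_left_zero_pair cons hxy hne h₁ h₂ h₃,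
      fun ⟨h₁, h₂, h₃⟩ => absorbed_of_absorbed_of_left_zero_pair cons hyx hne.symm h₁ h₂ h₃⟩,
    ⟨fun ⟨h₁, h₂, h₃⟩ => absorbs_of_absorbs_of_left_zero_pair cons hyx hne h₁ h₂ h₃,
      fun ⟨h₁, h₂, h₃⟩ => absorbs_of_absorbs_of_left_zero_pair cons hxy hne.symm h₁ h₂ h₃⟩⟩

lemma same_layer_of_mul_ne_mul (cons : ∀ a b : S, a * b = a ∨ a * b = b) {x y : S}
    (hxy : x * y ≠ y * x) (z : S) :
    ((z * x = z ∧ x * z = z ∧ z ≠ x) ↔ (z * y = z ∧ y * z = z ∧ z ≠ y)) ∧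
      ((x * z = x ∧ z * x = x ∧ x ≠ z) ↔ (y * z = y ∧ z * y = y ∧ y ≠ z)) := by
  have hne : x ≠ y := by rintro rfl; exact hxy rfl
  rcases mul_comm_cases_of_conservative cons hxy with ⟨h₁, h₂⟩ | ⟨h₁, h₂⟩
  · exact same_layer_of_left_zero_pair cons h₁ h₂ hne z
  · have cons_op : ∀ a b : Sᵐᵒᵖ, a * b = a ∨ a * b = b := fun a b =>
      (cons b.unop a.unop).symm.imp (fun h => unop_injective h) (fun h => unop_injective h)
    have := same_layer_of_left_zero_pair cons_op (x := op x) (y := op y)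
      (unop_injective h₂) (unop_injective h₁) (op_injective.ne hne) (op z)
    simpa only [← op_mul, op_inj, ne_eq, and_left_comm] using this

end Band

/-- In an idempotent residuated chain, non-commuting elements are on the same layer
of the monoidal preorder. -/
theorem stmt12 {A : Type*} [LinearOrder A] [Monoid A]
    (ld rd : A → A → A)
    (resl : ∀ x y z : A, x * y ≤ z ↔ y ≤ ld x z)
    (resr : ∀ x y z : A, x * y ≤ z ↔ x ≤ rd z y)
    (idem : ∀ x : A, x * x = x) :
    ∀ x y : A, x * y ≠ y * x →
      ∀ z : A,
        ((z * x = z ∧ x * z = z ∧ z ≠ x) ↔ (z * y = z ∧ y * z = z ∧ z ≠ y)) ∧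
        ((x * z = x ∧ z * x = x ∧ x ≠ z) ↔ (y * z = y ∧ z * y = y ∧ y ≠ z)) := by
  have := mulLeftMono_of_residuated ld resl
  have := mulRightMono_of_residuated rd resr
  intro x y hxy
  exact same_layer_of_mul_ne_mul (mul_eq_left_or_eq_right_of_idempotent idem) hxy
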